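/- Let V₀ → V₁ → ... → V_N be a persistence module with composites f^{i,j}, and let d^{i,j} = dim Im f^{i,j} (with d^{i,j} = 0 for out-of-range indices). There exists a unique function N : {(i,j) : 0 ≤ i ≤ j ≤ N} → ℕ such that for all 0 ≤ i ≤ j ≤ N, d^{i,j} equals the sum of N^{a,b} over all pairs (a,b) with a ≤ i and j ≤ b. Moreover N^{i,j} = d^{i,j} - d^{i-1,j} - d^{i,j+1} + d^{i-1,j+1}. -/

import Mathlib

open Module

/-- The composite structure map `f^{i,i+k} : V i → V (i+k)` of a persistence module,
with `f^{i,i} = id`. -/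
noncomputable def pcomp {F : Type*} [Field F] {V : ℕ → Type*} [∀ i, AddCommGroup (V i)]
    [∀ i, Module F (V i)] (f : ∀ i, V i →ₗ[F] V (i + 1)) (i : ℕ) :
    ∀ k, V i →ₗ[F] V (i + k)
  | 0 => LinearMap.id
  | (k + 1) => f (i + k) ∘ₗ pcomp f i k

/-- The rank function `d^{i,j} = dim Im f^{i,j}` of a persistence module `V₀ → ... → V_N`,
extended by `0` for out-of-range indices. -/
noncomputable def prank {F : Type*} [Field F] {V : ℕ → Type*} [∀ i, AddCommGroup (V i)]
    [∀ i, Module F (V i)] (N : ℕ) (f : ∀ i, V i →ₗ[F] V (i + 1)) (i j : ℤ) : ℕ :=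
  if 0 ≤ i ∧ i ≤ j ∧ j ≤ N then
    finrank F (LinearMap.range (pcomp f i.toNat (j - i).toNat))
  else 0

/-!
Möbius inversion on rectangles: summing a function over the rectangles `[0, i] × [j, N]` is
inverted by the mixed second difference, so the multiplicities are forced to be the mixed
difference of the rank function `d`, which gives uniqueness and the formula. Summing that mixed
difference back over a rectangle telescopes to `d` (which vanishes at `i = -1` and at
`j = N + 1`), so existence reduces to its nonnegativity. For `R' = Im f^{i-1,j} ≤ R = Im f^{i,j}`
in `V_j`, the kernel of `f_j` meets `R'` in a subspace of its intersection with `R`, so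
`d^{i-1,j} - d^{i-1,j+1} ≤ d^{i,j} - d^{i,j+1}`.
-/

open Finset

section RectangleSums

variable {G : Type*} [AddCommGroup G]

lemma Int.sum_Icc_eq_add_sum_Icc_add_one (g : ℤ → G) {m n : ℤ} (h : m ≤ n) :
    ∑ x ∈ Icc m n, g x = g m + ∑ x ∈ Icc (m + 1) n, g x := by
  rw [← insert_Icc_succ_left_eq_Icc h, Order.succ_eq_add_one, sum_insert (by simp)]

lemma Int.sum_Icc_eq_sum_Icc_sub_one_add (g : ℤ → G) {m n : ℤ} (h : m ≤ n) :
    ∑ x ∈ Icc m n, g x = ∑ x ∈ Icc m (n - 1), g x + g n := by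
  rw [← insert_Icc_pred_right_eq_Icc h, Order.pred_eq_sub_one, sum_insert (by simp), add_comm]

lemma Int.sum_Icc_sub_sub_one (g : ℤ → G) {m n : ℤ} (h : m - 1 ≤ n) :
    ∑ x ∈ Icc m n, (g x - g (x - 1)) = g n - g (m - 1) := by
  induction n, h using Int.leInduction with
  | base => simp
  | succ n hn ih =>
    rw [Int.sum_Icc_eq_sum_Icc_sub_one_add _ (by omega), add_sub_cancel_right, ih]
    abel

lemma Int.sum_Icc_sub_add_one (g : ℤ → G) {m n : ℤ} (h : m - 1 ≤ n) :
    ∑ x ∈ Icc m n, (g x - g (x + 1)) = g m - g (n + 1) := by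
  simpa only [sub_add_cancel, neg_sub_neg] using
    Int.sum_Icc_sub_sub_one (fun x => -g (x + 1)) h

def mixedDiff (g : ℤ → ℤ → G) (i j : ℤ) : G :=
  g i j - g (i - 1) j - g i (j + 1) + g (i - 1) (j + 1)

lemma sum_Icc_sum_Icc_mixedDiff (g : ℤ → ℤ → G) {m i j n : ℤ} (hi : m - 1 ≤ i) (hj : j - 1 ≤ n) :
    ∑ a ∈ Icc m i, ∑ b ∈ Icc j n, mixedDiff g a b =
      g i j - g (m - 1) j - g i (n + 1) + g (m - 1) (n + 1) := by
  have hcol : ∀ a, ∑ b ∈ Icc j n, mixedDiff g a b =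
      (g a j - g a (n + 1)) - (g (a - 1) j - g (a - 1) (n + 1)) := fun a => by
    rw [← sub_sub_sub_comm, ← Int.sum_Icc_sub_add_one (fun b => g a b - g (a - 1) b) hj]
    exact sum_congr rfl fun b _ => by simp only [mixedDiff]; abel
  simp only [hcol]
  rw [Int.sum_Icc_sub_sub_one (fun a => g a j - g a (n + 1)) hi]
  abel

lemma mixedDiff_sum_Icc_sum_Icc (M : ℤ → ℤ → G) {m i j n : ℤ} (hi : m ≤ i) (hj : j ≤ n) :
    mixedDiff (fun a b => ∑ x ∈ Icc m a, ∑ y ∈ Icc b n, M x y) i j = M i j := by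
  have hrow : ∀ b, ∑ x ∈ Icc m i, ∑ y ∈ Icc b n, M x y =
      ∑ x ∈ Icc m (i - 1), ∑ y ∈ Icc b n, M x y + ∑ y ∈ Icc b n, M i y := fun b =>
    Int.sum_Icc_eq_sum_Icc_sub_one_add _ hi
  simp only [mixedDiff, hrow, Int.sum_Icc_eq_add_sum_Icc_add_one (M i) hj]
  abel

end RectangleSums

lemma Submodule.finrank_map_add_finrank_inf_ker {K V W : Type*} [DivisionRing K]
    [AddCommGroup V] [Module K V] [AddCommGroup W] [Module K W] [FiniteDimensional K V]
    (p : Submodule K V) (φ : V →ₗ[K] W) :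
    finrank K (p.map φ) + finrank K ↥(p ⊓ LinearMap.ker φ) = finrank K p := by
  rw [← Submodule.map_comap_subtype,
    ← (Submodule.equivMapOfInjective _ p.injective_subtype _).finrank_eq,
    ← LinearMap.ker_domRestrict, ← LinearMap.range_domRestrict]
  exact (φ.domRestrict p).finrank_range_add_finrank_ker

lemma Submodule.finrank_add_finrank_map_le {K V W : Type*} [DivisionRing K]
    [AddCommGroup V] [Module K V] [AddCommGroup W] [Module K W] [FiniteDimensional K V]
    {p q : Submodule K V} (hpq : p ≤ q) (φ : V →ₗ[K] W) :
    finrank K p + finrank K (q.map φ) ≤ finrank K q + finrank K (p.map φ) := by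
  have hp := p.finrank_map_add_finrank_inf_ker φ
  have hq := q.finrank_map_add_finrank_inf_ker φ
  have hker := Submodule.finrank_mono (inf_le_inf_right (LinearMap.ker φ) hpq)
  omega

section PersistenceModule

variable {F : Type*} [Field F] {V : ℕ → Type*} [∀ i, AddCommGroup (V i)] [∀ i, Module F (V i)]
  (f : ∀ i, V i →ₗ[F] V (i + 1))

lemma comp_linearEquivCast {m n : ℕ} (h : m = n) :
    f n ∘ₗ (LinearEquiv.cast h).toLinearMap =
      (LinearEquiv.cast (congrArg (· + 1) h)).toLinearMap ∘ₗ f m := by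
  subst h
  rfl

lemma pcomp_succ_left (i : ℕ) : ∀ k, pcomp f i (k + 1) =
    (LinearEquiv.cast (Nat.add_right_comm i 1 k)).toLinearMap ∘ₗ pcomp f (i + 1) k ∘ₗ f i
  | 0 => rfl
  | k + 1 => by
    rw [pcomp, pcomp_succ_left i k, ← LinearMap.comp_assoc, comp_linearEquivCast]
    rfl

noncomputable def pcompRank (i k : ℕ) : ℕ := finrank F (LinearMap.range (pcomp f i k))

lemma range_pcomp_succ (i k : ℕ) :
    LinearMap.range (pcomp f i (k + 1)) = (LinearMap.range (pcomp f i k)).map (f (i + k)) :=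
  LinearMap.range_comp _ _

lemma pcompRank_succ_eq (i k : ℕ) :
    pcompRank f i (k + 1) = finrank F (LinearMap.range (pcomp f (i + 1) k ∘ₗ f i)) := by
  rw [pcompRank, pcomp_succ_left, LinearMap.range_comp, LinearEquiv.finrank_map_eq]

variable {N : ℕ}

lemma prank_eq_pcompRank_toNat {i j : ℤ} (hi : 0 ≤ i) (hij : i ≤ j) (hj : j ≤ N) :
    prank N f i j = pcompRank f i.toNat (j - i).toNat :=
  if_pos ⟨hi, hij, hj⟩

lemma prank_of_neg {i : ℤ} (hi : i < 0) (j : ℤ) : prank N f i j = 0 :=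
  if_neg (by omega)

lemma prank_of_lt {j : ℤ} (hj : N < j) (i : ℤ) : prank N f i j = 0 :=
  if_neg (by omega)

lemma prank_eq_sum_mixedDiff {i j : ℤ} (hi : 0 ≤ i) (hj : j ≤ N) :
    (prank N f i j : ℤ) =
      ∑ a ∈ Icc 0 i, ∑ b ∈ Icc j (N : ℤ), mixedDiff (fun a b => (prank N f a b : ℤ)) a b := by
  rw [sum_Icc_sum_Icc_mixedDiff _ (by omega) (by omega)]
  simp [prank_of_neg f, prank_of_lt f]

lemma eq_mixedDiff_prank_of_prank_eq_sum (M : ℤ → ℤ → ℕ)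
    (hM : ∀ i j : ℤ, 0 ≤ i → i ≤ j → j ≤ N →
      prank N f i j = ∑ a ∈ Icc 0 i, ∑ b ∈ Icc j (N : ℤ), M a b)
    {i j : ℤ} (hi : 0 ≤ i) (hij : i ≤ j) (hj : j ≤ N) :
    (M i j : ℤ) = mixedDiff (fun a b => (prank N f a b : ℤ)) i j := by
  have hM' : ∀ a b : ℤ, -1 ≤ a → a ≤ b → b ≤ N + 1 →
      (prank N f a b : ℤ) = ∑ x ∈ Icc 0 a, ∑ y ∈ Icc b (N : ℤ), (M x y : ℤ) := by
    intro a b ha hab hb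
    rcases ha.eq_or_lt with rfl | ha
    · simp [prank_of_neg f]
    rcases hb.eq_or_lt with rfl | hb
    · simp [prank_of_lt f]
    exact_mod_cast hM a b (by omega) hab (by omega)
  rw [← mixedDiff_sum_Icc_sum_Icc (fun x y => (M x y : ℤ)) hi hj]
  simp (disch := omega) only [mixedDiff, hM']

variable [∀ i, FiniteDimensional F (V i)]

lemma pcompRank_succ_le (i k : ℕ) : pcompRank f i (k + 1) ≤ pcompRank f i k := by
  rw [pcompRank, range_pcomp_succ]
  exact Submodule.finrank_map_le _ _

lemma pcompRank_succ_le_succ (i k : ℕ) : pcompRank f i (k + 1) ≤ pcompRank f (i + 1) k := by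
  rw [pcompRank_succ_eq]
  exact Submodule.finrank_mono (LinearMap.range_comp_le_range _ _)

lemma pcompRank_add_pcompRank_le (i k : ℕ) :
    pcompRank f i (k + 1) + pcompRank f (i + 1) (k + 1) ≤
      pcompRank f (i + 1) k + pcompRank f i (k + 2) := by
  have h := pcompRank_succ_eq f i (k + 1)
  rw [pcomp, LinearMap.comp_assoc, LinearMap.range_comp] at h
  rw [pcompRank_succ_eq, h, pcompRank, range_pcomp_succ]
  exact Submodule.finrank_add_finrank_map_le (LinearMap.range_comp_le_range _ _) _

lemma prank_sub_one_add_prank_add_one_le {i j : ℤ} (hi : 0 ≤ i) (hij : i ≤ j) (hj : j ≤ N) :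
    prank N f (i - 1) j + prank N f i (j + 1) ≤ prank N f i j + prank N f (i - 1) (j + 1) := by
  -- when `i = 0` or `j = N` the out-of-range ranks vanish, leaving monotonicity of the rank
  -- under post- or precomposition
  obtain rfl | hi := hi.eq_or_lt <;> obtain rfl | hj := hj.eq_or_lt <;>
    simp (disch := omega) only [prank_eq_pcompRank_toNat f, prank_of_neg f, prank_of_lt f,
      zero_add, add_zero]
  · exact Nat.zero_le _
  · convert pcompRank_succ_le f 0 j.toNat using 2 <;> omega
  · convert pcompRank_succ_le_succ f (i - 1).toNat (N - i).toNat using 2 <;> omega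
  · convert pcompRank_add_pcompRank_le f (i - 1).toNat (j - i).toNat using 3 <;> omega

lemma mixedDiff_prank_nonneg {i j : ℤ} (hi : 0 ≤ i) (hij : i ≤ j) (hj : j ≤ N) :
    0 ≤ mixedDiff (fun a b => (prank N f a b : ℤ)) i j := by
  have := prank_sub_one_add_prank_add_one_le f hi hij hj
  simp only [mixedDiff]
  omega

end PersistenceModule

/-- **Barcode decomposition (interval multiplicity form).** For a persistence module
`V₀ → ... → V_N` with rank function `d^{i,j} = dim Im f^{i,j}`, there is a function `N^{i,j}`
(the interval multiplicities), unique on the range `0 ≤ i ≤ j ≤ N`, such that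
`d^{i,j} = Σ_{a ≤ i, j ≤ b} N^{a,b}`; moreover
`N^{i,j} = d^{i,j} - d^{i-1,j} - d^{i,j+1} + d^{i-1,j+1}`. -/
theorem persistence_barcode_exists_unique {F : Type*} [Field F] {V : ℕ → Type*}
    [∀ i, AddCommGroup (V i)] [∀ i, Module F (V i)] [∀ i, FiniteDimensional F (V i)]
    (N : ℕ) (f : ∀ i, V i →ₗ[F] V (i + 1)) :
    ∃ Nf : ℤ → ℤ → ℕ,
      (∀ i j : ℤ, 0 ≤ i → i ≤ j → j ≤ N →
        prank N f i j = ∑ a ∈ Finset.Icc 0 i, ∑ b ∈ Finset.Icc j (N : ℤ), Nf a b) ∧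
      (∀ i j : ℤ, 0 ≤ i → i ≤ j → j ≤ N →
        (Nf i j : ℤ) = (prank N f i j : ℤ) - (prank N f (i - 1) j : ℤ)
          - (prank N f i (j + 1) : ℤ) + (prank N f (i - 1) (j + 1) : ℤ)) ∧
      (∀ Nf' : ℤ → ℤ → ℕ,
        (∀ i j : ℤ, 0 ≤ i → i ≤ j → j ≤ N →
          prank N f i j = ∑ a ∈ Finset.Icc 0 i, ∑ b ∈ Finset.Icc j (N : ℤ), Nf' a b) →
        ∀ i j : ℤ, 0 ≤ i → i ≤ j → j ≤ N → Nf' i j = Nf i j) := by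
  refine ⟨fun i j => (mixedDiff (fun a b => (prank N f a b : ℤ)) i j).toNat,
    fun i j hi hij hj => ?_,
    fun i j hi hij hj => Int.toNat_of_nonneg (mixedDiff_prank_nonneg f hi hij hj),
    fun M hM i j hi hij hj => ?_⟩
  · rw [← Nat.cast_inj (R := ℤ), prank_eq_sum_mixedDiff f hi hj]
    push_cast
    refine sum_congr rfl fun a ha => sum_congr rfl fun b hb => ?_
    rw [mem_Icc] at ha hb
    exact (Int.toNat_of_nonneg (mixedDiff_prank_nonneg f ha.1 (by omega) hb.2)).symm
  · rw [← Nat.cast_inj (R := ℤ), eq_mixedDiff_prank_of_prank_eq_sum f M hM hi hij hj,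
      Int.toNat_of_nonneg (mixedDiff_prank_nonneg f hi hij hj)]
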